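/- Define φ_0 = p ∨ q and φ_k = φ_0 ∧ □_i φ_{k-1}. Then |φ_k| is linear in k (precisely 3 + 5k), while the smallest CDNF formula equivalent to φ_k has size at least single-exponential in k. Hence CDNF is not at least as succinct as SDNF. -/

import Mathlib

inductive Fm (A P : Type) : Type
  | tru : Fm A P
  | bot : Fm A P
  | var : P → Fm A P
  | neg : Fm A P → Fm A P
  | and : Fm A P → Fm A P → Fm A P
  | or : Fm A P → Fm A P → Fm A P
  | box : A → Fm A P → Fm A P
  | dia : A → Fm A P → Fm A P

structure KM (A P : Type) where
  S : Type
  R : A → S → S → Prop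
  V : S → P → Prop

variable {A P : Type}

def Sat (M : KM A P) : M.S → Fm A P → Prop
  | _, .tru => True
  | _, .bot => False
  | s, .var p => M.V s p
  | s, .neg φ => ¬ Sat M s φ
  | s, .and φ ψ => Sat M s φ ∧ Sat M s ψ
  | s, .or φ ψ => Sat M s φ ∨ Sat M s ψ
  | s, .box i φ => ∀ t, M.R i s t → Sat M t φ
  | s, .dia i φ => ∃ t, M.R i s t ∧ Sat M t φ

def Satisfiable (φ : Fm A P) : Prop := ∃ (M : KM A P) (s : M.S), Sat M s φ

def Entails (φ ψ : Fm A P) : Prop := ∀ (M : KM A P) (s : M.S), Sat M s φ → Sat M s ψ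

def FEquiv (φ ψ : Fm A P) : Prop := Entails φ ψ ∧ Entails ψ φ

/-- Size: number of occurrences of variables, connectives and modalities. -/
def fsize : Fm A P → ℕ
  | .tru => 1
  | .bot => 1
  | .var _ => 1
  | .neg φ => fsize φ + 1
  | .and φ ψ => fsize φ + fsize ψ + 1
  | .or φ ψ => fsize φ + fsize ψ + 1
  | .box _ φ => fsize φ + 1
  | .dia _ φ => fsize φ + 1

def IsProp : Fm A P → Prop
  | .tru => True
  | .bot => True
  | .var _ => True
  | .neg φ => IsProp φ
  | .and φ ψ => IsProp φ ∧ IsProp ψ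
  | .or φ ψ => IsProp φ ∧ IsProp ψ
  | .box _ _ => False
  | .dia _ _ => False

def conj : List (Fm A P) → Fm A P
  | [] => Fm.tru
  | φ :: L => φ.and (conj L)

def disj : List (Fm A P) → Fm A P
  | [] => Fm.bot
  | φ :: L => φ.or (disj L)

mutual
  inductive IsSTE : Fm A P → Prop
    | prop {α : Fm A P} : IsProp α → IsSTE α
    | mk (α : Fm A P) (B : List (A × Fm A P × List (Fm A P))) :
        IsProp α →
        (∀ x ∈ B, IsSDNF x.2.1) →
        (∀ x ∈ B, ∀ γ ∈ x.2.2, IsSDNF γ) →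
        (∀ x ∈ B, ∀ γ ∈ x.2.2, Entails γ x.2.1) →
        IsSTE (α.and (conj (B.map fun x =>
          (Fm.box x.1 x.2.1).and (conj (x.2.2.map (Fm.dia x.1))))))
  inductive IsSDNF : Fm A P → Prop
    | single {φ : Fm A P} : IsSTE φ → IsSDNF φ
    | or {φ ψ : Fm A P} : IsSDNF φ → IsSDNF ψ → IsSDNF (φ.or ψ)
end

inductive IsLit : Fm A P → Prop
  | pos (p : P) : IsLit (Fm.var p)
  | neg (p : P) : IsLit (Fm.neg (Fm.var p))

inductive IsTE : Fm A P → Prop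
  | lit {φ : Fm A P} : IsLit φ → IsTE φ
  | and {φ ψ : Fm A P} : IsTE φ → IsTE ψ → IsTE (φ.and ψ)

def cover (i : A) (Φ : List (Fm A P)) : Fm A P :=
  (Fm.box i (disj Φ)).and (conj (Φ.map (Fm.dia i)))

inductive IsCDNF : Fm A P → Prop
  | base (τ : Fm A P) (B : List (A × List (Fm A P))) :
      IsTE τ → Satisfiable τ →
      (∀ x ∈ B, ∀ φ ∈ x.2, IsCDNF φ) →
      IsCDNF (τ.and (conj (B.map fun x => cover x.1 x.2)))
  | or {φ ψ : Fm A P} : IsCDNF φ → IsCDNF ψ → IsCDNF (φ.or ψ)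

/-- `φ_0 = p ∨ q`, `φ_k = φ_0 ∧ □_i φ_{k-1}`. -/
def phik (p q : P) (i : A) : ℕ → Fm A P
  | 0 => (Fm.var p).or (Fm.var q)
  | k + 1 => ((Fm.var p).or (Fm.var q)).and (Fm.box i (phik p q i k))

/-!
`φ_k` holds at every state of the infinite chain `0 → 1 → 2 → ⋯` on which only `p` is true.
A CDNF formula `ψ` true at chain state `n` is true there through one base disjunct, and each
`□_i`-cover `∇_i Φ` of that disjunct has some `φ ∈ Φ` true at `n + 1`; since `φ` occurs in the
cover twice, once under `□_i` and once under `◇_i`, these witnesses have at most half the size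
of `ψ` altogether. Grafting any pointed model `(N, t)` of the witnesses below `n` as an extra
`i`-successor keeps `ψ`, hence `φ_k`, true at `n`, so `(N, t)` satisfies `φ_{k-1}`: the
witnesses jointly entail `φ_{k-1}`, are true at chain state `n + 1`, and have half the size.
After `k` halvings the list must still be nonempty, as `p ∨ q` is not valid, so `|ψ| ≥ 2^k`.
On the other hand `φ_k` has an SDNF equivalent of size `3 + 9k`, and no polynomial dominates
`2^k` on it.
-/

open Filter Asymptotics Polynomial

section Semantics

lemma one_le_fsize (φ : Fm A P) : 1 ≤ fsize φ := by
  cases φ <;> simp [fsize]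

lemma sat_conj {M : KM A P} {s : M.S} {L : List (Fm A P)} :
    Sat M s (conj L) ↔ ∀ φ ∈ L, Sat M s φ := by
  induction L with
  | nil => simp [conj, Sat]
  | cons φ L ih => simp [conj, Sat, ih]

lemma sat_disj {M : KM A P} {s : M.S} {L : List (Fm A P)} :
    Sat M s (disj L) ↔ ∃ φ ∈ L, Sat M s φ := by
  induction L with
  | nil => simp [disj, Sat]
  | cons φ L ih => simp [disj, Sat, ih]

lemma sum_fsize_le_fsize_conj (L : List (Fm A P)) : (L.map fsize).sum ≤ fsize (conj L) := by
  induction L with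
  | nil => simp
  | cons φ L ih => simp only [List.map_cons, List.sum_cons, conj, fsize]; omega

lemma sum_fsize_le_fsize_disj (L : List (Fm A P)) : (L.map fsize).sum ≤ fsize (disj L) := by
  induction L with
  | nil => simp
  | cons φ L ih => simp only [List.map_cons, List.sum_cons, disj, fsize]; omega

lemma two_mul_fsize_le_fsize_cover (i : A) {Φ : List (Fm A P)} {φ : Fm A P} (hφ : φ ∈ Φ) :
    2 * fsize φ ≤ fsize (cover i Φ) := by
  have h_box : fsize φ ≤ fsize (disj Φ) :=
    (List.le_sum_of_mem (List.mem_map_of_mem hφ)).trans (sum_fsize_le_fsize_disj Φ)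
  have h_dia : fsize (Fm.dia i φ) ≤ fsize (conj (Φ.map (Fm.dia i))) :=
    (List.le_sum_of_mem (List.mem_map_of_mem (List.mem_map_of_mem hφ))).trans
      (sum_fsize_le_fsize_conj _)
  simp only [cover, fsize] at h_dia ⊢
  omega

lemma IsTE.sat_iff {τ : Fm A P} (h : IsTE τ) {M M' : KM A P} {s : M.S} {s' : M'.S}
    (hV : ∀ r, M.V s r ↔ M'.V s' r) : Sat M s τ ↔ Sat M' s' τ := by
  induction h with
  | lit hl => cases hl <;> simp only [Sat, hV]
  | and _ _ ih₁ ih₂ => simp only [Sat, ih₁, ih₂]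

lemma FEquiv.trans {φ ψ χ : Fm A P} (h₁ : FEquiv φ ψ) (h₂ : FEquiv ψ χ) : FEquiv φ χ :=
  ⟨fun M s h => h₂.1 M s (h₁.1 M s h), fun M s h => h₁.2 M s (h₂.2 M s h)⟩

end Semantics

section BoundedMorphism

structure IsBoundedMorphismOn (M N : KM A P) (f : M.S → N.S) (T : Set M.S) : Prop where
  closed : ∀ a u v, u ∈ T → M.R a u v → v ∈ T
  val_iff : ∀ u ∈ T, ∀ r, M.V u r ↔ N.V (f u) r
  forth : ∀ a u v, u ∈ T → M.R a u v → N.R a (f u) (f v)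
  back : ∀ a u w, u ∈ T → N.R a (f u) w → ∃ v, M.R a u v ∧ f v = w

theorem IsBoundedMorphismOn.sat_iff {M N : KM A P} {f : M.S → N.S} {T : Set M.S}
    (hf : IsBoundedMorphismOn M N f T) (φ : Fm A P) :
    ∀ u ∈ T, (Sat M u φ ↔ Sat N (f u) φ) := by
  induction φ with
  | tru | bot => simp [Sat]
  | var r => exact fun u hu => hf.val_iff u hu r
  | neg φ ih => exact fun u hu => not_congr (ih u hu)
  | and φ ψ ih₁ ih₂ => exact fun u hu => and_congr (ih₁ u hu) (ih₂ u hu)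
  | or φ ψ ih₁ ih₂ => exact fun u hu => or_congr (ih₁ u hu) (ih₂ u hu)
  | box a φ ih =>
    intro u hu
    constructor
    · intro h w hw
      obtain ⟨v, hv, rfl⟩ := hf.back a u w hu hw
      exact (ih v (hf.closed a u v hu hv)).1 (h v hv)
    · exact fun h v hv => (ih v (hf.closed a u v hu hv)).2 (h (f v) (hf.forth a u v hu hv))
  | dia a φ ih =>
    intro u hu
    constructor
    · rintro ⟨v, hv, h⟩
      exact ⟨f v, hf.forth a u v hu hv, (ih v (hf.closed a u v hu hv)).1 h⟩
    · rintro ⟨w, hw, h⟩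
      obtain ⟨v, hv, rfl⟩ := hf.back a u w hu hw
      exact ⟨v, hv, (ih v (hf.closed a u v hu hv)).2 h⟩

end BoundedMorphism

section Graft

def graft (M : KM A P) (s : M.S) (i : A) (N : KM A P) (t : N.S) : KM A P where
  S := M.S ⊕ N.S
  R a
    | .inl u, .inl v => M.R a u v
    | .inl u, .inr v => a = i ∧ u = s ∧ v = t
    | .inr u, .inr v => N.R a u v
    | .inr _, .inl _ => False
  V
    | .inl u => M.V u
    | .inr v => N.V v

variable {M : KM A P} {s : M.S} {i : A} {N : KM A P} {t : N.S}

lemma sat_graft_inr (φ : Fm A P) (v : N.S) : Sat (graft M s i N t) (.inr v) φ ↔ Sat N v φ := by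
  refine (IsBoundedMorphismOn.sat_iff (T := Set.univ) ⟨?_, ?_, ?_, ?_⟩ φ v trivial).symm
  · simp
  · exact fun _ _ _ => Iff.rfl
  · exact fun _ _ _ _ h => h
  · rintro a u (w | w) - h
    · exact h.elim
    · exact ⟨w, h, rfl⟩

lemma sat_graft_inl {T : Set M.S} (hT : ∀ a u v, u ∈ T → M.R a u v → v ∈ T) (hs : s ∉ T)
    (φ : Fm A P) {u : M.S} (hu : u ∈ T) : Sat (graft M s i N t) (.inl u) φ ↔ Sat M u φ := by
  refine (IsBoundedMorphismOn.sat_iff ⟨hT, ?_, ?_, ?_⟩ φ u hu).symm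
  · exact fun _ _ _ => Iff.rfl
  · exact fun _ _ _ _ h => h
  · rintro a u (w | w) hu h
    · exact ⟨w, h, rfl⟩
    · exact (hs (h.2.1 ▸ hu)).elim

end Graft

section Chain

variable (A) in
def chainModel (p : P) : KM A P := ⟨ℕ, fun _ m m' => m' = m + 1, fun _ r => r = p⟩

lemma sat_phik_chainModel (p q : P) (i : A) (k n : ℕ) :
    Sat (chainModel A p) n (phik p q i k) := by
  induction k generalizing n with
  | zero => exact Or.inl rfl
  | succ k ih => exact ⟨Or.inl rfl, fun _ h => h ▸ ih (n + 1)⟩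

variable {p : P} {i : A} {N : KM A P} {t : N.S} {n : ℕ}

lemma sat_graft_chainModel_succ (φ : Fm A P) :
    Sat (graft (chainModel A p) n i N t) (.inl (n + 1)) φ ↔ Sat (chainModel A p) (n + 1) φ :=
  sat_graft_inl (M := chainModel A p) (T := (Set.Ioi n : Set ℕ))
    (fun _ _ _ hu h => h ▸ Nat.lt_succ_of_lt hu) (lt_irrefl n) φ (Nat.lt_succ_self n)

lemma sat_graft_chainModel_cover {a : A} {Φ : List (Fm A P)}
    (h : Sat (chainModel A p) n (cover a Φ)) (ht : a = i → Sat N t (disj Φ)) :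
    Sat (graft (chainModel A p) n i N t) (.inl n) (cover a Φ) := by
  obtain ⟨h_box, h_dia⟩ := h
  refine ⟨?_, sat_conj.2 fun ψ hψ => ?_⟩
  · rintro (m | v) hm
    · obtain rfl : m = n + 1 := hm
      exact (sat_graft_chainModel_succ _).2 (h_box _ rfl)
    · obtain ⟨rfl, -, rfl⟩ := hm
      exact (sat_graft_inr _ _).2 (ht rfl)
  · obtain ⟨φ, -, rfl⟩ := List.mem_map.1 hψ
    obtain ⟨m, rfl, hm⟩ := sat_conj.1 h_dia _ hψ
    exact ⟨.inl (n + 1), rfl, (sat_graft_chainModel_succ _).2 hm⟩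

end Chain

section Split

variable {p : P} {i : A} {n : ℕ}

structure IsSplit (p : P) (i : A) (n : ℕ) (L L' : List (Fm A P)) : Prop where
  isCDNF : ∀ φ ∈ L', IsCDNF φ
  sat_succ : ∀ φ ∈ L', Sat (chainModel A p) (n + 1) φ
  two_mul_size_le : 2 * (L'.map fsize).sum ≤ (L.map fsize).sum
  sat_graft : ∀ (N : KM A P) (t : N.S), (∀ φ ∈ L', Sat N t φ) →
    ∀ χ ∈ L, Sat (graft (chainModel A p) n i N t) (.inl n) χ

lemma IsSplit.append {L₁ L₁' L₂ L₂' : List (Fm A P)} (h₁ : IsSplit p i n L₁ L₁')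
    (h₂ : IsSplit p i n L₂ L₂') : IsSplit p i n (L₁ ++ L₂) (L₁' ++ L₂') where
  isCDNF φ hφ := (List.mem_append.1 hφ).elim (h₁.isCDNF φ) (h₂.isCDNF φ)
  sat_succ φ hφ := (List.mem_append.1 hφ).elim (h₁.sat_succ φ) (h₂.sat_succ φ)
  two_mul_size_le := by
    simp only [List.map_append, List.sum_append]
    linarith [h₁.two_mul_size_le, h₂.two_mul_size_le]
  sat_graft N t ht χ hχ := (List.mem_append.1 hχ).elim
    (h₁.sat_graft N t (fun φ hφ => ht φ (List.mem_append_left _ hφ)) χ)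
    (h₂.sat_graft N t (fun φ hφ => ht φ (List.mem_append_right _ hφ)) χ)

lemma exists_isSplit_of_forall_singleton {L : List (Fm A P)}
    (h : ∀ χ ∈ L, ∃ L', IsSplit p i n [χ] L') : ∃ L', IsSplit p i n L L' := by
  induction L with
  | nil => exact ⟨[], ⟨by simp, by simp, by simp, by simp⟩⟩
  | cons χ L ih =>
    obtain ⟨L₁', h₁⟩ := h χ List.mem_cons_self
    obtain ⟨L₂', h₂⟩ := ih fun ψ hψ => h ψ (List.mem_cons_of_mem χ hψ)
    exact ⟨L₁' ++ L₂', h₁.append h₂⟩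

lemma IsSplit.of_entails {χ χ' : Fm A P} {L' : List (Fm A P)} (h : IsSplit p i n [χ] L')
    (h_size : fsize χ ≤ fsize χ') (h_entails : Entails χ χ') : IsSplit p i n [χ'] L' where
  __ := h
  two_mul_size_le := by simpa using h.two_mul_size_le.trans h_size
  sat_graft N t ht _ hχ := by
    rw [List.mem_singleton.1 hχ]
    exact h_entails _ _ (h.sat_graft N t ht χ List.mem_cons_self)

lemma IsSplit.and_conj {τ : Fm A P} {L L' : List (Fm A P)} (h : IsSplit p i n L L')
    (hτ : IsTE τ) (hτ_sat : Sat (chainModel A p) n τ) : IsSplit p i n [τ.and (conj L)] L' where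
  __ := h
  two_mul_size_le := by
    have := sum_fsize_le_fsize_conj L
    have := h.two_mul_size_le
    simp only [List.map_cons, List.map_nil, List.sum_cons, List.sum_nil, fsize]
    omega
  sat_graft N t ht _ hχ := by
    rw [List.mem_singleton.1 hχ]
    have hV : ∀ r, (chainModel A p).V n r ↔ (graft (chainModel A p) n i N t).V (.inl n) r :=
      fun _ => Iff.rfl
    exact ⟨(hτ.sat_iff hV).1 hτ_sat, sat_conj.2 (h.sat_graft N t ht)⟩

lemma exists_isSplit_cover {a : A} {Φ : List (Fm A P)} (hΦ : ∀ φ ∈ Φ, IsCDNF φ)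
    (h : Sat (chainModel A p) n (cover a Φ)) : ∃ L', IsSplit p i n [cover a Φ] L' := by
  by_cases hai : a = i
  · subst hai
    obtain ⟨φ, hφ, hφ_sat⟩ := sat_disj.1 (h.1 (n + 1) rfl)
    refine ⟨[φ], by simpa using hΦ φ hφ, by simpa using hφ_sat, ?_, ?_⟩
    · simpa using two_mul_fsize_le_fsize_cover a hφ
    · intro N t ht _ hχ
      rw [List.mem_singleton.1 hχ]
      exact sat_graft_chainModel_cover h fun _ => sat_disj.2 ⟨φ, hφ, ht φ List.mem_cons_self⟩
  · refine ⟨[], by simp, by simp, by simp, fun N t _ _ hχ => ?_⟩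
    rw [List.mem_singleton.1 hχ]
    exact sat_graft_chainModel_cover h fun h => (hai h).elim

lemma IsCDNF.exists_isSplit {χ : Fm A P} (hχ : IsCDNF χ) (h : Sat (chainModel A p) n χ) :
    ∃ L', IsSplit p i n [χ] L' := by
  induction hχ with
  | base τ B hτ _ hB =>
    obtain ⟨hτ_sat, hB_sat⟩ := h
    obtain ⟨L', hL'⟩ : ∃ L', IsSplit p i n (B.map fun x => cover x.1 x.2) L' := by
      refine exists_isSplit_of_forall_singleton fun χ hχ => ?_
      obtain ⟨x, hx, rfl⟩ := List.mem_map.1 hχ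
      exact exists_isSplit_cover (hB x hx) (sat_conj.1 hB_sat _ hχ)
    exact ⟨L', hL'.and_conj hτ hτ_sat⟩
  | or _ _ ih₁ ih₂ =>
    rcases h with h | h
    · obtain ⟨L', hL'⟩ := ih₁ h
      exact ⟨L', hL'.of_entails (by simp only [fsize]; omega) fun _ _ => Or.inl⟩
    · obtain ⟨L', hL'⟩ := ih₂ h
      exact ⟨L', hL'.of_entails (by simp only [fsize]; omega) fun _ _ => Or.inr⟩

lemma exists_isSplit {L : List (Fm A P)} (hL : ∀ χ ∈ L, IsCDNF χ)
    (h : ∀ χ ∈ L, Sat (chainModel A p) n χ) : ∃ L', IsSplit p i n L L' :=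
  exists_isSplit_of_forall_singleton fun χ hχ => (hL χ hχ).exists_isSplit (h χ hχ)

end Split

section LowerBound

variable {p q : P} {i : A}

theorem two_pow_le_sum_fsize (k n : ℕ) {L : List (Fm A P)} (hL : ∀ χ ∈ L, IsCDNF χ)
    (h : ∀ χ ∈ L, Sat (chainModel A p) n χ)
    (h_entails : ∀ (N : KM A P) (t : N.S), (∀ χ ∈ L, Sat N t χ) → Sat N t (phik p q i k)) :
    2 ^ k ≤ (L.map fsize).sum := by
  induction k generalizing n L with
  | zero =>
    obtain _ | ⟨χ, L⟩ := L
    · have := h_entails ⟨Unit, fun _ _ _ => False, fun _ _ => False⟩ () (by simp)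
      exact (this.elim id id).elim
    · simpa using le_add_right (one_le_fsize χ)
  | succ k ih =>
    obtain ⟨L', hL'⟩ := exists_isSplit (i := i) hL h
    have h_entails' (N : KM A P) (t : N.S) (ht : ∀ φ ∈ L', Sat N t φ) : Sat N t (phik p q i k) :=
      (sat_graft_inr _ _).1 <|
        (h_entails _ _ (hL'.sat_graft N t ht)).2 (.inr t) ⟨rfl, rfl, rfl⟩
    calc 2 ^ (k + 1) = 2 * 2 ^ k := pow_succ' 2 k
      _ ≤ 2 * (L'.map fsize).sum :=
        Nat.mul_le_mul_left 2 (ih (n + 1) hL'.isCDNF hL'.sat_succ h_entails')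
      _ ≤ (L.map fsize).sum := hL'.two_mul_size_le

theorem two_pow_le_fsize_of_fEquiv_phik {k : ℕ} {ψ : Fm A P} (hψ : IsCDNF ψ)
    (h : FEquiv ψ (phik p q i k)) : 2 ^ k ≤ fsize ψ := by
  simpa using two_pow_le_sum_fsize k 0 (L := [ψ]) (by simpa using hψ)
    (by simpa using h.2 _ _ (sat_phik_chainModel p q i k 0))
    (fun N t ht => h.1 N t (ht ψ List.mem_cons_self))

end LowerBound

section SDNF

variable (p q : P) (i : A)

-- An `IsSTE.mk` term with the single `□_i`-entry `φ_{k-1}` and no `◇_i`-entries.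
def sdnfPhik : ℕ → Fm A P
  | 0 => (Fm.var p).or (Fm.var q)
  | k + 1 => ((Fm.var p).or (Fm.var q)).and (((Fm.box i (sdnfPhik k)).and Fm.tru).and Fm.tru)

lemma isSDNF_sdnfPhik (k : ℕ) : IsSDNF (sdnfPhik p q i k) := by
  induction k with
  | zero => exact .single (.prop ⟨trivial, trivial⟩)
  | succ k ih =>
    exact .single (.mk _ [(i, sdnfPhik p q i k, [])] ⟨trivial, trivial⟩ (by simpa using ih)
      (by simp) (by simp))

lemma fsize_sdnfPhik (k : ℕ) : fsize (sdnfPhik p q i k) = 3 + 9 * k := by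
  induction k with
  | zero => rfl
  | succ k ih => simp only [sdnfPhik, fsize, ih]; omega

lemma sat_sdnfPhik_iff (k : ℕ) (M : KM A P) (s : M.S) :
    Sat M s (sdnfPhik p q i k) ↔ Sat M s (phik p q i k) := by
  induction k generalizing s with
  | zero => rfl
  | succ k ih => simp only [sdnfPhik, phik, Sat, and_true, ih]

lemma fEquiv_sdnfPhik_phik (k : ℕ) : FEquiv (sdnfPhik p q i k) (phik p q i k) :=
  ⟨fun M s => (sat_sdnfPhik_iff p q i k M s).1, fun M s => (sat_sdnfPhik_iff p q i k M s).2⟩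

lemma fsize_phik (k : ℕ) : fsize (phik p q i k) = 3 + 5 * k := by
  induction k with
  | zero => rfl
  | succ k ih => simp only [phik, fsize, ih]; omega

end SDNF

theorem Polynomial.eventually_eval_lt_two_pow (f : ℕ[X]) (a b : ℕ) :
    ∀ᶠ k in atTop, f.eval (a + b * k) < 2 ^ k := by
  set g : ℝ[X] := (f.comp (C a + C b * X)).map (Nat.castRingHom ℝ)
  have hg (k : ℕ) : g.eval (k : ℝ) = (f.eval (a + b * k) : ℕ) := by
    simp [g, eval_natCast_map, eval_comp]
  have hlittle : (fun k : ℕ => g.eval (k : ℝ)) =o[atTop] fun k => (2 : ℝ) ^ k :=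
    (g.isEquivalent_atTop_lead.isBigO.comp_tendsto tendsto_natCast_atTop_atTop).trans_isLittleO
      ((isLittleO_pow_const_const_pow_of_one_lt g.natDegree one_lt_two).const_mul_left _)
  filter_upwards [hlittle.def one_half_pos] with k hk
  have : ((f.eval (a + b * k) : ℕ) : ℝ) < 2 ^ k := by
    rw [← hg]
    simp only [Real.norm_eq_abs, abs_pow, abs_two] at hk
    linarith [le_abs_self (g.eval (k : ℝ)), pow_pos (two_pos : (0 : ℝ) < 2) k]
  exact_mod_cast this

theorem cdnf_not_as_succinct_as_sdnf (p q : P) (hpq : p ≠ q) (i : A) :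
    (∀ k : ℕ, fsize (phik p q i k) = 3 + 5 * k) ∧
    (∃ c : ℝ, 1 < c ∧ ∀ (k : ℕ) (ψ : Fm A P),
       IsCDNF ψ → FEquiv ψ (phik p q i k) → c ^ k ≤ (fsize ψ : ℝ)) ∧
    ¬ ∃ f : Polynomial ℕ, ∀ φ : Fm A P, IsSDNF φ →
        ∃ ψ : Fm A P, IsCDNF ψ ∧ FEquiv ψ φ ∧ fsize ψ ≤ f.eval (fsize φ) := by
  refine ⟨fsize_phik p q i, ⟨2, one_lt_two, fun k ψ hψ h => ?_⟩, ?_⟩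
  · exact_mod_cast two_pow_le_fsize_of_fEquiv_phik hψ h
  · rintro ⟨f, hf⟩
    obtain ⟨k, hk⟩ := (f.eventually_eval_lt_two_pow 3 9).exists
    obtain ⟨ψ, hψ, h, h_size⟩ := hf _ (isSDNF_sdnfPhik p q i k)
    have := two_pow_le_fsize_of_fEquiv_phik hψ (h.trans (fEquiv_sdnfPhik_phik p q i k))
    rw [fsize_sdnfPhik] at h_size
    omega
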